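/- For a uniform airgap (constant permeance P₀), the stator phase self-inductance computed from winding function theory equals L_ss = 2πlP₀(⟨AS²⟩ − ⟨AS⟩²) = (14π/9)·l·P₀·N², using ⟨AS²⟩ = 16N²/9 and ⟨AS⟩ = N. -/

import Mathlib

open Real

/-- The trapezoidal stator turn function on `[0, π)`. -/
noncomputable def AS (N φ : ℝ) : ℝ :=
  if φ < Real.pi / 6 then 12 * N / Real.pi * φ
  else if φ < Real.pi / 2 then 2 * N
  else if φ < 2 * Real.pi / 3 then 8 * N - 12 * N / Real.pi * φ
  else 0

open intervalIntegral MeasureTheory in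
lemma AS_eqOn1 (N : ℝ) : Set.EqOn (AS N) (fun φ => 12 * N / Real.pi * φ)
    (Set.uIcc 0 (Real.pi/6)) := by
  have hπ := Real.pi_pos
  intro x hx
  rw [Set.uIcc_of_le (by positivity)] at hx
  obtain ⟨h1, h2⟩ := hx
  unfold AS
  split_ifs with a1 a2 a3 <;> try rfl
  · -- x = π/6 (not < π/6 but < π/2)
    have : x = Real.pi / 6 := le_antisymm h2 (not_lt.mp a1)
    subst this; field_simp; ring
  · linarith
  · linarith

open intervalIntegral MeasureTheory in
lemma AS_eqOn2 (N : ℝ) : Set.EqOn (AS N) (fun _ => 2 * N)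
    (Set.uIcc (Real.pi/6) (Real.pi/2)) := by
  have hπ := Real.pi_pos
  intro x hx
  rw [Set.uIcc_of_le (by linarith)] at hx
  obtain ⟨h1, h2⟩ := hx
  unfold AS
  split_ifs with a1 a2 a3 <;> try rfl
  · linarith
  · -- x = π/2
    have : x = Real.pi / 2 := le_antisymm h2 (not_lt.mp a2)
    subst this; field_simp; ring
  · linarith

open intervalIntegral MeasureTheory in
lemma AS_eqOn3 (N : ℝ) : Set.EqOn (AS N) (fun φ => 8 * N - 12 * N / Real.pi * φ)
    (Set.uIcc (Real.pi/2) (2*Real.pi/3)) := by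
  have hπ := Real.pi_pos
  intro x hx
  rw [Set.uIcc_of_le (by linarith)] at hx
  obtain ⟨h1, h2⟩ := hx
  unfold AS
  split_ifs with a1 a2 a3 <;> try rfl
  · linarith
  · linarith
  · -- x = 2π/3
    have : x = 2 * Real.pi / 3 := le_antisymm h2 (not_lt.mp a3)
    subst this; field_simp; ring

open intervalIntegral MeasureTheory in
lemma AS_eqOn4 (N : ℝ) : Set.EqOn (AS N) (fun _ => 0)
    (Set.uIcc (2*Real.pi/3) Real.pi) := by
  have hπ := Real.pi_pos
  intro x hx
  rw [Set.uIcc_of_le (by linarith)] at hx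
  obtain ⟨h1, h2⟩ := hx
  unfold AS
  split_ifs with a1 a2 a3 <;> first | rfl | linarith

open intervalIntegral MeasureTheory in
lemma AS_integral (N : ℝ) : ∫ φ in (0:ℝ)..Real.pi, AS N φ = N * Real.pi := by
  have hπ := Real.pi_pos
  have hπ' : Real.pi ≠ 0 := ne_of_gt hπ
  have i1 : IntervalIntegrable (AS N) volume 0 (Real.pi/6) :=
    ((continuous_const.mul continuous_id).intervalIntegrable _ _).congr_ae
      (Filter.EventuallyEq.symm (((AS_eqOn1 N).mono Set.uIoc_subset_uIcc).eventuallyEq_of_mem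
        (self_mem_ae_restrict measurableSet_uIoc)))
  have i2 : IntervalIntegrable (AS N) volume (Real.pi/6) (Real.pi/2) :=
    ((continuous_const).intervalIntegrable _ _).congr_ae
      (Filter.EventuallyEq.symm (((AS_eqOn2 N).mono Set.uIoc_subset_uIcc).eventuallyEq_of_mem
        (self_mem_ae_restrict measurableSet_uIoc)))
  have i3 : IntervalIntegrable (AS N) volume (Real.pi/2) (2*Real.pi/3) :=
    ((continuous_const.sub (continuous_const.mul continuous_id)).intervalIntegrable _ _).congr_ae
      (Filter.EventuallyEq.symm (((AS_eqOn3 N).mono Set.uIoc_subset_uIcc).eventuallyEq_of_mem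
        (self_mem_ae_restrict measurableSet_uIoc)))
  have i4 : IntervalIntegrable (AS N) volume (2*Real.pi/3) Real.pi :=
    (continuous_const.intervalIntegrable _ _).congr_ae
      (Filter.EventuallyEq.symm (((AS_eqOn4 N).mono Set.uIoc_subset_uIcc).eventuallyEq_of_mem
        (self_mem_ae_restrict measurableSet_uIoc)))
  have I1 : ∫ x in (0:ℝ)..Real.pi/6, 12 * N / Real.pi * x = N * Real.pi / 6 := by
    rw [intervalIntegral.integral_const_mul, integral_id]; field_simp; ring
  have I2 : ∫ _x in (Real.pi/6)..(Real.pi/2), (2*N : ℝ) = 2 * N * Real.pi / 3 := by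
    rw [intervalIntegral.integral_const, smul_eq_mul]; ring
  have I3 : ∫ x in (Real.pi/2)..(2*Real.pi/3), (8 * N - 12 * N / Real.pi * x)
      = N * Real.pi / 6 := by
    rw [integral_sub (g := fun x : ℝ => 12 * N / Real.pi * x) (continuous_const.intervalIntegrable _ _)
      ((continuous_const.mul continuous_id').intervalIntegrable _ _),
      intervalIntegral.integral_const, intervalIntegral.integral_const_mul, integral_id, smul_eq_mul]
    field_simp; ring
  have I4 : ∫ _x in (2*Real.pi/3)..Real.pi, (0:ℝ) = 0 := by simp
  rw [← integral_add_adjacent_intervals (b := 2*Real.pi/3)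
        ((i1.trans i2).trans i3) i4,
      ← integral_add_adjacent_intervals (b := Real.pi/2) (i1.trans i2) i3,
      ← integral_add_adjacent_intervals (b := Real.pi/6) i1 i2,
      integral_congr (AS_eqOn1 N), integral_congr (AS_eqOn2 N),
      integral_congr (AS_eqOn3 N), integral_congr (AS_eqOn4 N), I1, I2, I3, I4]
  ring

open intervalIntegral MeasureTheory in
lemma AS_sq_integral (N : ℝ) :
    ∫ φ in (0:ℝ)..Real.pi, (AS N φ)^2 = 16 * N^2 * Real.pi / 9 := by
  have hπ := Real.pi_pos
  have hπ' : Real.pi ≠ 0 := ne_of_gt hπ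
  have sq : ∀ (f g : ℝ → ℝ) (a b : ℝ), Set.EqOn f g (Set.uIcc a b) →
      Set.EqOn (fun φ => (f φ)^2) (fun φ => (g φ)^2) (Set.uIcc a b) := by
    intro f g a b h x hx; simp only [h hx]
  have i1 : IntervalIntegrable (fun φ => (AS N φ)^2) volume 0 (Real.pi/6) :=
    (((continuous_const.mul continuous_id).pow 2).intervalIntegrable _ _).congr_ae
      (Filter.EventuallyEq.symm (((sq _ _ _ _ (AS_eqOn1 N)).mono Set.uIoc_subset_uIcc).eventuallyEq_of_mem
        (self_mem_ae_restrict measurableSet_uIoc)))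
  have i2 : IntervalIntegrable (fun φ => (AS N φ)^2) volume (Real.pi/6) (Real.pi/2) :=
    ((continuous_const.pow 2).intervalIntegrable _ _).congr_ae
      (Filter.EventuallyEq.symm (((sq _ _ _ _ (AS_eqOn2 N)).mono Set.uIoc_subset_uIcc).eventuallyEq_of_mem
        (self_mem_ae_restrict measurableSet_uIoc)))
  have i3 : IntervalIntegrable (fun φ => (AS N φ)^2) volume (Real.pi/2) (2*Real.pi/3) :=
    (((continuous_const.sub (continuous_const.mul continuous_id)).pow 2).intervalIntegrable _ _).congr_ae
      (Filter.EventuallyEq.symm (((sq _ _ _ _ (AS_eqOn3 N)).mono Set.uIoc_subset_uIcc).eventuallyEq_of_mem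
        (self_mem_ae_restrict measurableSet_uIoc)))
  have i4 : IntervalIntegrable (fun φ => (AS N φ)^2) volume (2*Real.pi/3) Real.pi :=
    ((continuous_const.pow 2).intervalIntegrable _ _).congr_ae
      (Filter.EventuallyEq.symm (((sq _ _ _ _ (AS_eqOn4 N)).mono Set.uIoc_subset_uIcc).eventuallyEq_of_mem
        (self_mem_ae_restrict measurableSet_uIoc)))
  have I1 : ∫ x in (0:ℝ)..Real.pi/6, (12 * N / Real.pi * x)^2 = 2 * N^2 * Real.pi / 9 := by
    have e1 : ∀ x : ℝ, (12 * N / Real.pi * x)^2 = (144*N^2/Real.pi^2) * x^2 := fun x => by ring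
    simp only [e1]
    rw [intervalIntegral.integral_const_mul, integral_pow]
    field_simp; ring
  have I2 : ∫ _x in (Real.pi/6)..(Real.pi/2), ((2*N:ℝ))^2 = 4 * N^2 * Real.pi / 3 := by
    rw [intervalIntegral.integral_const, smul_eq_mul]; ring
  have I3 : ∫ x in (Real.pi/2)..(2*Real.pi/3), (8 * N - 12 * N / Real.pi * x)^2
      = 2 * N^2 * Real.pi / 9 := by
    have e3 : ∀ x : ℝ, (8 * N - 12 * N / Real.pi * x)^2 =
        (144*N^2/Real.pi^2) * x^2 - (192*N^2/Real.pi) * x + 64*N^2 := fun x => by ring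
    simp only [e3]
    have hi : IntervalIntegrable (fun x : ℝ => (144*N^2/Real.pi^2) * x^2) volume
        (Real.pi/2) (2*Real.pi/3) :=
      (continuous_const.mul (continuous_pow 2)).intervalIntegrable _ _
    have hi2 : IntervalIntegrable (fun x : ℝ => (192*N^2/Real.pi) * x) volume
        (Real.pi/2) (2*Real.pi/3) :=
      (continuous_const.mul continuous_id).intervalIntegrable _ _
    rw [integral_add (hi.sub hi2) (continuous_const.intervalIntegrable _ _),
        integral_sub hi hi2, intervalIntegral.integral_const_mul, intervalIntegral.integral_const_mul, integral_pow, integral_id,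
        intervalIntegral.integral_const, smul_eq_mul]
    field_simp; ring
  have I4 : ∫ _x in (2*Real.pi/3)..Real.pi, ((0:ℝ))^2 = 0 := by simp
  rw [← integral_add_adjacent_intervals (b := 2*Real.pi/3)
        ((i1.trans i2).trans i3) i4,
      ← integral_add_adjacent_intervals (b := Real.pi/2) (i1.trans i2) i3,
      ← integral_add_adjacent_intervals (b := Real.pi/6) i1 i2,
      integral_congr (sq _ _ _ _ (AS_eqOn1 N)), integral_congr (sq _ _ _ _ (AS_eqOn2 N)),
      integral_congr (sq _ _ _ _ (AS_eqOn3 N)), integral_congr (sq _ _ _ _ (AS_eqOn4 N)),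
      I1, I2, I3, I4]
  ring

/-- Uniform-airgap stator phase self-inductance:
`L_ss = 2πlP₀(⟨AS²⟩ − ⟨AS⟩²) = (14π/9)·l·P₀·N²`. -/
theorem stator_self_inductance (l P₀ N : ℝ) (hl : 0 < l) (hP : 0 < P₀) (hN : 0 < N) :
    2 * Real.pi * l * P₀ *
        ((1 / Real.pi) * (∫ φ in (0:ℝ)..Real.pi, (AS N φ) ^ 2) -
          ((1 / Real.pi) * ∫ φ in (0:ℝ)..Real.pi, AS N φ) ^ 2) =
      14 * Real.pi / 9 * l * P₀ * N ^ 2 := by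
  have hπ' : Real.pi ≠ 0 := ne_of_gt Real.pi_pos
  rw [AS_integral, AS_sq_integral]
  field_simp
  ring
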